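/- Let Λ = [[a,b],[c,d]] be a real 2×2 matrix with ad − bc = 1 and b > 0. Then the Linear Canonical Transform 𝓛_Λ is unitary on Schwartz functions: for every Schwartz function f : ℝ → ℂ, ∫_ℝ |(𝓛_Λ f)(ω)|² dω = ∫_ℝ |f(t)|² dt. -/

import Mathlib

open MeasureTheory Complex

noncomputable section

/-- The LCT kernel `k_Λ(t, ω) = (1/√(-2πib)) exp(-(i/(2b))(a t² + d ω² - 2 ω t))`,
where `√` is the principal branch of the complex square root. -/
def lctKernel (a b d : ℝ) (t ω : ℝ) : ℂ :=
  (((-2 : ℂ) * (Real.pi : ℂ) * Complex.I * (b : ℂ)) ^ ((1 : ℂ) / 2))⁻¹ *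
    exp (-(Complex.I / (2 * (b : ℂ))) *
      ((a : ℂ) * (t : ℂ) ^ 2 + (d : ℂ) * (ω : ℂ) ^ 2 - 2 * (ω : ℂ) * (t : ℂ)))

/-- The Linear Canonical Transform `(𝓛_Λ f)(ω) = ∫ f(t) conj (k_Λ(t,ω)) dt`. -/
def lct (a b d : ℝ) (f : ℝ → ℂ) (ω : ℝ) : ℂ :=
  ∫ t : ℝ, f t * (starRingEnd ℂ) (lctKernel a b d t ω)

/-! Splitting the phase of the kernel gives `conj k_Λ(t, ω) =
conj(√(-2πib))⁻¹ · e^{i d ω² / 2b} · e^{i a t² / 2b} · e^{-2πi t (ω / 2πb)}`,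
so `𝓛_Λ f` is, up to a prefactor of modulus `(2π|b|)^{-1/2}` and a unimodular chirp in `ω`,
the Fourier transform of the Schwartz function `e^{i a t² / 2b} f(t)` evaluated at `ω / 2πb`.
Plancherel and the substitution `ξ = ω / 2πb` then give the isometry. -/

open FourierTransform
open scoped Real

def chirp (r t : ℝ) : ℂ := exp ((r * t ^ 2 : ℝ) * I)

theorem norm_chirp (r t : ℝ) : ‖chirp r t‖ = 1 := norm_exp_ofReal_mul_I _

theorem iteratedDeriv_cexp_ofReal_mul_I (n : ℕ) :
    iteratedDeriv n (fun s : ℝ => exp (s * I)) = fun s : ℝ => I ^ n * exp (s * I) := by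
  induction n with
  | zero => simp
  | succ n ih =>
    have hderiv : deriv (fun s : ℝ => exp (s * I)) = fun s : ℝ => I * exp (s * I) := by
      funext s
      exact (((hasDerivAt_id s).ofReal_comp.mul_const I).cexp).deriv.trans (by simp [mul_comm])
    funext s
    rw [iteratedDeriv_succ', hderiv, iteratedDeriv_const_mul_field, ih, pow_succ']
    ring

theorem hasTemperateGrowth_cexp_ofReal_mul_I :
    (fun s : ℝ => exp (s * I)).HasTemperateGrowth := by
  refine ⟨(ofRealCLM.contDiff.mul contDiff_const).cexp, fun n => ⟨0, 1, fun s => ?_⟩⟩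
  rw [norm_iteratedFDeriv_eq_norm_iteratedDeriv, iteratedDeriv_cexp_ofReal_mul_I]
  simp [norm_exp_ofReal_mul_I]

theorem hasTemperateGrowth_chirp (r : ℝ) : (chirp r).HasTemperateGrowth :=
  hasTemperateGrowth_cexp_ofReal_mul_I.comp (f := fun t : ℝ => r * t ^ 2) (by fun_prop)

theorem norm_sq_cpow_one_div_two (z : ℂ) : ‖z ^ (1 / 2 : ℂ)‖ ^ 2 = ‖z‖ := by
  rw [← norm_pow, one_div, ← Nat.cast_ofNat, cpow_nat_inv_pow z two_ne_zero]

-- At `b = 0` both sides are `0`, through `x / 0 = 0` and `0⁻¹ = 0`.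
theorem lct_eq_fourier (a b d : ℝ) (f : ℝ → ℂ) (ω : ℝ) :
    lct a b d f ω =
      (starRingEnd ℂ) ((-2 * π * I * b) ^ (1 / 2 : ℂ))⁻¹ * chirp (d / (2 * b)) ω *
        𝓕 (fun t => chirp (a / (2 * b)) t * f t) (ω / (2 * π * b)) := by
  rw [lct, Real.fourier_real_eq, ← integral_const_mul]
  congr 1
  funext t
  have hphase : (starRingEnd ℂ) (-(I / (2 * b)) * (a * t ^ 2 + d * ω ^ 2 - 2 * ω * t)) =
      ((d / (2 * b) * ω ^ 2 : ℝ) : ℂ) * I +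
        ((2 * π * -(t * (ω / (2 * π * b))) : ℝ) : ℂ) * I +
        ((a / (2 * b) * t ^ 2 : ℝ) : ℂ) * I := by
    simp only [map_mul, map_neg, map_div₀, map_add, map_sub, map_pow, map_ofNat, conj_I,
      conj_ofReal]
    push_cast
    field_simp
    ring
  simp only [lctKernel, chirp, map_mul, ← exp_conj, hphase, exp_add, Circle.smul_def,
    Real.fourierChar_apply, smul_eq_mul]
  ring

theorem norm_sq_lct (a b d : ℝ) (f : ℝ → ℂ) (ω : ℝ) :
    ‖lct a b d f ω‖ ^ 2 =
      (2 * π * |b|)⁻¹ *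
        ‖𝓕 (fun t => chirp (a / (2 * b)) t * f t) (ω / (2 * π * b))‖ ^ 2 := by
  rw [lct_eq_fourier, norm_mul, norm_mul, mul_pow, mul_pow, norm_chirp, RCLike.norm_conj,
    norm_inv, inv_pow, norm_sq_cpow_one_div_two]
  simp [abs_of_pos Real.pi_pos]

theorem lct_unitary_general (a b d : ℝ) (hb : 0 < b)
    (f : SchwartzMap ℝ ℂ) :
    ∫ ω : ℝ, ‖lct a b d (fun x => f x) ω‖ ^ 2 = ∫ t : ℝ, ‖f t‖ ^ 2 := by
  set g := SchwartzMap.smulLeftCLM ℂ (chirp (a / (2 * b))) f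
  have hg : ⇑g = fun t => chirp (a / (2 * b)) t * f t :=
    SchwartzMap.smulLeftCLM_apply (hasTemperateGrowth_chirp _) f
  have hc : 0 < 2 * π * b := by positivity
  calc ∫ ω : ℝ, ‖lct a b d (fun x => f x) ω‖ ^ 2
      = ∫ ω : ℝ, (2 * π * b)⁻¹ * ‖𝓕 g (ω / (2 * π * b))‖ ^ 2 := by
        simp_rw [norm_sq_lct, abs_of_pos hb, SchwartzMap.fourier_coe, hg]
    _ = ∫ ξ : ℝ, ‖𝓕 g ξ‖ ^ 2 := by
        rw [integral_const_mul, Measure.integral_comp_div (fun ξ => ‖𝓕 g ξ‖ ^ 2),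
          abs_of_pos hc, smul_eq_mul, inv_mul_cancel_left₀ hc.ne']
    _ = ∫ t : ℝ, ‖g t‖ ^ 2 := SchwartzMap.integral_norm_sq_fourier g
    _ = ∫ t : ℝ, ‖f t‖ ^ 2 := by simp_rw [hg, norm_mul, norm_chirp, one_mul]

/-- **Unitarity of the LCT on Schwartz functions.**  For `Λ = [[a,b],[c,d]]` with
`ad - bc = 1` and `b > 0`, `∫ |(𝓛_Λ f)(ω)|² dω = ∫ |f(t)|² dt`. -/
theorem lct_unitary (a b c d : ℝ) (hdet : a * d - b * c = 1) (hb : 0 < b)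
    (f : SchwartzMap ℝ ℂ) :
    ∫ ω : ℝ, ‖lct a b d (fun x => f x) ω‖ ^ 2 = ∫ t : ℝ, ‖f t‖ ^ 2 :=
  lct_unitary_general a b d hb f
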